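/- Lemma 5.2 of the paper (strict domination of the smooth Gerber–Shiu continuation, unbounded variation case). Assume σ > 0. Let a < b and let g, h : ℝ → ℝ be continuous with h(x) = g(x) for x ≤ a and with the smooth-fit condition h′(a) = g′(a), so that f := h − g is continuously differentiable on ℝ with f = 0 on (−∞,a] and f′(a) = 0. Assume: f is twice continuously differentiable on (a,b) with f′ and f″ bounded on (a,(a+b)/2) and with lim_{x↓a} f″(x) existing; g and h are twice differentiable on (a,b) with y ↦ g(x+y) − g(x) and y ↦ h(x+y) − h(x) Π-integrable for every x ∈ [a,b); ℒh(x) = 0 for all x ∈ (a,b); and x ↦ ℒg(x) is continuous on [a,b) with ℒg(x) < 0 for all x ∈ [a,b). Then f = h − g is strictly increasing on (a,b); in particular h(x) > g(x) for all x ∈ (a,b). -/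

import Mathlib

open MeasureTheory Set Filter Topology

/-!
Write `f = h - g`. By linearity `ℒf = ℒh - ℒg = -ℒg > 0` on `(a, b)`, and a maximum principle makes `f`
strictly increasing on `[a, b)`: were `f x ≥ f x'` for some `a ≤ x < x' < b`, then, `f` being constant
on `(-∞, a]`, its maximum over `(-∞, x']` would be attained at some `c ∈ [a, x')`. If `c > a`, then
`f'(c) = 0`, `f''(c) ≤ 0` and every jump `f(c + y) - f(c)` is nonpositive, so `ℒf(c) ≤ 0`.
The case `c = a` is excluded by the boundary behaviour: as `x ↓ a` the drift term of `ℒf(x)` vanishes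
by smooth fit and the jump term by dominated convergence, so `σ²/2 · f''(x) → -ℒg(a) > 0`, and `f`
leaves `a` increasing.
-/

noncomputable def gen (δ σ : ℝ) (ν : Measure ℝ) (f : ℝ → ℝ) (x : ℝ) : ℝ :=
  δ * deriv f x + σ ^ 2 / 2 * deriv (deriv f) x +
    ∫ y in Iio (0 : ℝ), (f (x + y) - f x) ∂ν

lemma IsLocalMax.deriv_deriv_nonpos {f : ℝ → ℝ} {c : ℝ} (hmax : IsLocalMax f c)
    (hc : ContinuousAt f c) : deriv (deriv f) c ≤ 0 := by
  by_contra! hpos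
  have hmin := isLocalMin_of_deriv_deriv_pos hpos hmax.deriv_eq_zero hc
  have hconst : f =ᶠ[𝓝 c] fun _ => f c := by
    filter_upwards [hmin, hmax] with z h₁ h₂ using le_antisymm h₂ h₁
  have hderiv : deriv f =ᶠ[𝓝 c] fun _ => 0 := by
    filter_upwards [hconst.eventuallyEq_nhds] with z hz
    rw [hz.deriv_eq, deriv_const]
  rw [hderiv.deriv_eq, deriv_const] at hpos
  exact hpos.false

lemma abs_sub_le_mul_min_one_of_lipschitzOnWith {f : ℝ → ℝ} {K : NNReal} {a x y : ℝ}
    (hf : LipschitzOnWith K f (Icc (a - 1) (a + 1))) (hconst : ∀ z ≤ a, f z = f a)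
    (hx : x ∈ Icc a (a + 1)) (hy : y < 0) : |f (x + y) - f x| ≤ K * min 1 |y| := by
  have hmem : ∀ t ∈ Icc (-1) 0, x + t ∈ Icc (a - 1) (a + 1) := fun t ht =>
    ⟨by linarith [hx.1, ht.1], by linarith [hx.2, ht.2]⟩
  have hxmem : x ∈ Icc (a - 1) (a + 1) := by simpa using hmem 0 (by norm_num)
  rw [← Real.dist_eq]
  rcases le_total y (-1) with hy1 | hy1
  · rw [hconst (x + y) (by linarith [hx.2]), ← hconst (x + -1) (by linarith [hx.2])]
    calc dist (f (x + -1)) (f x) ≤ K * dist (x + -1) x :=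
          hf.dist_le_mul _ (hmem _ (by norm_num)) _ hxmem
      _ = K * min 1 |y| := by
          rw [min_eq_left (by rw [abs_of_neg hy]; linarith)]; simp
  · calc dist (f (x + y)) (f x) ≤ K * dist (x + y) x :=
          hf.dist_le_mul _ (hmem _ ⟨hy1, hy.le⟩) _ hxmem
      _ = K * min 1 |y| := by
          rw [min_eq_right (by rw [abs_of_neg hy]; linarith)]; simp

noncomputable def jumpPart (ν : Measure ℝ) (f : ℝ → ℝ) (x : ℝ) : ℝ :=
  ∫ y in Iio (0 : ℝ), (f (x + y) - f x) ∂ν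

section Generator

variable {δ σ : ℝ} {ν : Measure ℝ}

lemma gen_eq_jumpPart (f : ℝ → ℝ) (x : ℝ) :
    gen δ σ ν f x = δ * deriv f x + σ ^ 2 / 2 * deriv (deriv f) x + jumpPart ν f x := rfl

lemma tendsto_jumpPart_nhdsGT {f : ℝ → ℝ} {a : ℝ}
    (hν : IntegrableOn (fun y => min 1 |y|) (Iio 0) ν) (hf : ContDiff ℝ 1 f)
    (hconst : ∀ x ≤ a, f x = f a) : Tendsto (jumpPart ν f) (𝓝[>] a) (𝓝 0) := by
  obtain ⟨K, hK⟩ := hf.locallyLipschitz.locallyLipschitzOn.exists_lipschitzOnWith_of_compact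
    (isCompact_Icc (a := a - 1) (b := a + 1))
  have hbound : ∀ᶠ x in 𝓝[>] a, ∀ᵐ y ∂ν.restrict (Iio 0), ‖f (x + y) - f x‖ ≤ K * min 1 |y| := by
    filter_upwards [Ioo_mem_nhdsGT (show a < a + 1 by linarith)] with x hx
    refine (ae_restrict_iff' measurableSet_Iio).2 (Eventually.of_forall fun y hy => ?_)
    exact abs_sub_le_mul_min_one_of_lipschitzOnWith hK hconst (Ioo_subset_Icc_self hx) hy
  have hlim : ∀ᵐ y ∂ν.restrict (Iio 0), Tendsto (fun x => f (x + y) - f x) (𝓝[>] a) (𝓝 0) := by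
    refine (ae_restrict_iff' measurableSet_Iio).2 (Eventually.of_forall fun y (hy : y < 0) => ?_)
    have hcont : Continuous fun x => f (x + y) - f x := by fun_prop
    have : Tendsto (fun x => f (x + y) - f x) (𝓝[>] a) (𝓝 (f (a + y) - f a)) :=
      (hcont.tendsto a).mono_left nhdsWithin_le_nhds
    rwa [hconst (a + y) (by linarith), sub_self] at this
  have hmeas : ∀ᶠ x in 𝓝[>] a,
      AEStronglyMeasurable (fun y => f (x + y) - f x) (ν.restrict (Iio 0)) :=
    Eventually.of_forall fun x => by fun_prop
  have h := tendsto_integral_filter_of_dominated_convergence _ hmeas hbound (hν.const_mul K) hlim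
  rwa [integral_zero] at h

lemma jumpPart_sub {g h : ℝ → ℝ} {x : ℝ}
    (hg : IntegrableOn (fun y => g (x + y) - g x) (Iio 0) ν)
    (hh : IntegrableOn (fun y => h (x + y) - h x) (Iio 0) ν) :
    jumpPart ν (fun z => h z - g z) x = jumpPart ν h x - jumpPart ν g x := by
  rw [jumpPart, jumpPart, jumpPart, ← integral_sub hh hg]
  congr 1 with y
  ring

lemma gen_sub {g h : ℝ → ℝ} {x : ℝ}
    (hg : ∀ᶠ z in 𝓝 x, DifferentiableAt ℝ g z) (hh : ∀ᶠ z in 𝓝 x, DifferentiableAt ℝ h z)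
    (hg' : DifferentiableAt ℝ (deriv g) x) (hh' : DifferentiableAt ℝ (deriv h) x)
    (hgi : IntegrableOn (fun y => g (x + y) - g x) (Iio 0) ν)
    (hhi : IntegrableOn (fun y => h (x + y) - h x) (Iio 0) ν) :
    gen δ σ ν (fun z => h z - g z) x = gen δ σ ν h x - gen δ σ ν g x := by
  have hderiv : deriv (fun z => h z - g z) =ᶠ[𝓝 x] fun z => deriv h z - deriv g z := by
    filter_upwards [hg, hh] with z hgz hhz using deriv_fun_sub hhz hgz
  rw [gen_eq_jumpPart, gen_eq_jumpPart, gen_eq_jumpPart, hderiv.eq_of_nhds, hderiv.deriv_eq,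
    deriv_fun_sub hh' hg', jumpPart_sub hgi hhi]
  ring

lemma jumpPart_nonpos_of_isMaxOn {f : ℝ → ℝ} {c : ℝ} (hmax : IsMaxOn f (Iic c) c) :
    jumpPart ν f c ≤ 0 :=
  setIntegral_nonpos measurableSet_Iio fun y (hy : y < 0) =>
    sub_nonpos.2 (hmax (show c + y ≤ c by linarith))

lemma gen_nonpos_of_isMaxOn {f : ℝ → ℝ} {c d : ℝ} (hcd : c < d) (hmax : IsMaxOn f (Iic d) c)
    (hc : ContinuousAt f c) : gen δ σ ν f c ≤ 0 := by
  have hloc : IsLocalMax f c := hmax.isLocalMax (Iic_mem_nhds hcd)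
  have hdiffusion : σ ^ 2 / 2 * deriv (deriv f) c ≤ 0 :=
    mul_nonpos_of_nonneg_of_nonpos (by positivity) (hloc.deriv_deriv_nonpos hc)
  have hjump : jumpPart ν f c ≤ 0 :=
    jumpPart_nonpos_of_isMaxOn (hmax.on_subset (Iic_subset_Iic.2 hcd.le))
  rw [gen_eq_jumpPart, hloc.deriv_eq_zero]
  linarith

theorem strictMonoOn_Ico_of_gen_pos {f : ℝ → ℝ} {a b : ℝ} (hf : Continuous f)
    (hleft : ∀ x ≤ a, f x ≤ f a) (hnear : ∀ᶠ x in 𝓝[>] a, f a < f x)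
    (hgen : ∀ x ∈ Ioo a b, 0 < gen δ σ ν f x) : StrictMonoOn f (Ico a b) := by
  intro x hx y hy hxy
  by_contra! hyx
  have hay : a < y := hx.1.trans_lt hxy
  obtain ⟨c, ⟨hac, hcy⟩, hmax⟩ : ∃ c ∈ Ico a y, IsMaxOn f (Icc a y) c := by
    obtain ⟨c, hc, hmax⟩ :=
      isCompact_Icc.exists_isMaxOn (nonempty_Icc.2 hay.le) hf.continuousOn
    rcases hc.2.lt_or_eq with hcy | rfl
    · exact ⟨c, ⟨hc.1, hcy⟩, hmax⟩
    · exact ⟨x, ⟨hx.1, hxy⟩, fun z hz => (hmax hz).trans hyx⟩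
  have hmax' : IsMaxOn f (Iic y) c := fun z (hz : z ≤ y) => by
    rcases le_total z a with hza | haz
    · exact (hleft z hza).trans (hmax ⟨le_rfl, hay.le⟩)
    · exact hmax ⟨haz, hz⟩
  rcases hac.eq_or_lt with rfl | hac
  · obtain ⟨z, hz, hzy⟩ := (hnear.and (Ioo_mem_nhdsGT hay)).exists
    exact (hmax' hzy.2.le).not_gt hz
  · exact (hgen c ⟨hac, hcy.trans hy.2⟩).not_ge (gen_nonpos_of_isMaxOn hcy hmax' hf.continuousAt)

theorem eventually_lt_of_tendsto_gen_pos {f : ℝ → ℝ} {a ℓ : ℝ} (hσ : σ ≠ 0)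
    (hν : IntegrableOn (fun y => min 1 |y|) (Iio 0) ν) (hf : ContDiff ℝ 1 f)
    (hconst : ∀ x ≤ a, f x = f a) (hf'a : deriv f a = 0)
    (hℓ : 0 < ℓ) (hgen : Tendsto (gen δ σ ν f) (𝓝[>] a) (𝓝 ℓ)) :
    ∀ᶠ x in 𝓝[>] a, f a < f x := by
  have hf' : Continuous (deriv f) := hf.continuous_deriv le_rfl
  have hderiv : Tendsto (deriv f) (𝓝[>] a) (𝓝 0) :=
    hf'a ▸ (hf'.tendsto a).mono_left nhdsWithin_le_nhds
  have hdiffusion : Tendsto (fun x => σ ^ 2 / 2 * deriv (deriv f) x) (𝓝[>] a) (𝓝 ℓ) := by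
    have h := (hgen.sub (hderiv.const_mul δ)).sub (tendsto_jumpPart_nhdsGT hν hf hconst)
    rw [mul_zero, sub_zero, sub_zero] at h
    refine h.congr fun x => ?_
    rw [gen_eq_jumpPart]
    ring
  obtain ⟨u, hau, hu⟩ := mem_nhdsGT_iff_exists_Ioo_subset.1 <|
    (hdiffusion.eventually (eventually_gt_nhds hℓ)).mono fun x hx =>
      pos_of_mul_pos_right hx (by positivity : (0 : ℝ) ≤ σ ^ 2 / 2)
  have hf'mono : StrictMonoOn (deriv f) (Icc a u) :=
    strictMonoOn_of_deriv_pos (convex_Icc a u) hf'.continuousOn fun x hx =>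
      hu (by rwa [interior_Icc] at hx)
  have hfmono : StrictMonoOn f (Icc a u) :=
    strictMonoOn_of_deriv_pos (convex_Icc a u) hf.continuous.continuousOn fun x hx => by
      rw [interior_Icc] at hx
      simpa [hf'a] using hf'mono (left_mem_Icc.2 hau.le) (Ioo_subset_Icc_self hx) hx.1
  filter_upwards [Ioo_mem_nhdsGT hau] with x hx
  exact hfmono (left_mem_Icc.2 hau.le) (Ioo_subset_Icc_self hx) hx.1

end Generator

theorem stmt6_general
    (δ σ : ℝ) (hσ : 0 < σ)
    (ν : Measure ℝ)
    (hνint : IntegrableOn (fun y => min 1 |y|) (Iio (0 : ℝ)) ν)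
    (a b : ℝ) (hab : a < b) (g h : ℝ → ℝ)
    (hagree : ∀ x ≤ a, h x = g x)
    (hfC1 : ContDiff ℝ 1 (fun z => h z - g z))
    (hf'a : deriv (fun z => h z - g z) a = 0)
    (hgdiff : ∀ x ∈ Ioo a b, DifferentiableAt ℝ g x ∧ DifferentiableAt ℝ (deriv g) x)
    (hhdiff : ∀ x ∈ Ioo a b, DifferentiableAt ℝ h x ∧ DifferentiableAt ℝ (deriv h) x)
    (hgint : ∀ x ∈ Ico a b, IntegrableOn (fun y => g (x + y) - g x) (Iio (0 : ℝ)) ν)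
    (hhint : ∀ x ∈ Ico a b, IntegrableOn (fun y => h (x + y) - h x) (Iio (0 : ℝ)) ν)
    (hharm : ∀ x ∈ Ioo a b, gen δ σ ν h x = 0)
    (hLgcont : ContinuousOn (fun x => gen δ σ ν g x) (Ico a b))
    (hLgneg : ∀ x ∈ Ico a b, gen δ σ ν g x < 0) :
    StrictMonoOn (fun z => h z - g z) (Ioo a b) ∧ ∀ x ∈ Ioo a b, g x < h x := by
  have hf0 : ∀ x ≤ a, h x - g x = 0 := fun x hx => sub_eq_zero.2 (hagree x hx)
  have hconst : ∀ x ≤ a, h x - g x = h a - g a := fun x hx => by rw [hf0 x hx, hf0 a le_rfl]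
  have hgen : ∀ x ∈ Ioo a b, gen δ σ ν (fun z => h z - g z) x = -gen δ σ ν g x := by
    intro x hx
    have hnhds : Ioo a b ∈ 𝓝 x := isOpen_Ioo.mem_nhds hx
    rw [gen_sub (eventually_of_mem hnhds fun z hz => (hgdiff z hz).1)
      (eventually_of_mem hnhds fun z hz => (hhdiff z hz).1) (hgdiff x hx).2 (hhdiff x hx).2
      (hgint x (Ioo_subset_Ico_self hx)) (hhint x (Ioo_subset_Ico_self hx)), hharm x hx, zero_sub]
  have hlim : Tendsto (gen δ σ ν (fun z => h z - g z)) (𝓝[>] a) (𝓝 (-gen δ σ ν g a)) := by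
    have hLga := (hLgcont a (left_mem_Ico.2 hab)).neg
    rw [ContinuousWithinAt, nhdsWithin_Ico_eq_nhdsGE hab] at hLga
    exact (hLga.mono_left (nhdsWithin_mono a Ioi_subset_Ici_self)).congr'
      (eventuallyEq_of_mem (Ioo_mem_nhdsGT hab) fun x hx => (hgen x hx).symm)
  have hnear := eventually_lt_of_tendsto_gen_pos hσ.ne' hνint hfC1 hconst hf'a
    (neg_pos.2 (hLgneg a (left_mem_Ico.2 hab))) hlim
  have hmono := strictMonoOn_Ico_of_gen_pos hfC1.continuous (fun x hx => (hconst x hx).le) hnear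
    fun x hx => (hgen x hx).symm ▸ neg_pos.2 (hLgneg x (Ioo_subset_Ico_self hx))
  refine ⟨hmono.mono Ioo_subset_Ico_self, fun x hx => ?_⟩
  simpa [hf0 a le_rfl] using hmono (left_mem_Ico.2 hab) (Ioo_subset_Ico_self hx) hx.1

/-- Lemma 5.2 (unbounded variation case `σ > 0`): if `h` agrees with `g` on
`(-∞,a]` with smooth fit `h'(a) = g'(a)`, is harmonic on `(a,b)` while
`ℒg < 0` on `[a,b)`, then `h - g` is strictly increasing on `(a,b)`;
in particular `h > g` on `(a,b)`. -/
theorem stmt6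
    (δ σ : ℝ) (hσ : 0 < σ)
    (ν : Measure ℝ) (hν0 : ν ≠ 0) (hνsupp : ν (Ici (0 : ℝ)) = 0)
    (hνint : IntegrableOn (fun y => min 1 |y|) (Iio (0 : ℝ)) ν)
    (a b : ℝ) (hab : a < b) (g h : ℝ → ℝ)
    (hgc : Continuous g) (hhc : Continuous h)
    (hagree : ∀ x ≤ a, h x = g x)
    (hfit : deriv h a = deriv g a)
    (hfC1 : ContDiff ℝ 1 (fun z => h z - g z))
    (hf'a : deriv (fun z => h z - g z) a = 0)
    (hf2 : ∀ x ∈ Ioo a b, DifferentiableAt ℝ (deriv (fun z => h z - g z)) x)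
    (hf2cont : ContinuousOn (deriv (deriv (fun z => h z - g z))) (Ioo a b))
    (hfbdd : ∃ M, ∀ x ∈ Ioo a ((a + b) / 2),
      |deriv (fun z => h z - g z) x| ≤ M ∧ |deriv (deriv (fun z => h z - g z)) x| ≤ M)
    (hf''lim : ∃ L, Tendsto (deriv (deriv (fun z => h z - g z))) (𝓝[>] a) (𝓝 L))
    (hgdiff : ∀ x ∈ Ioo a b, DifferentiableAt ℝ g x ∧ DifferentiableAt ℝ (deriv g) x)
    (hhdiff : ∀ x ∈ Ioo a b, DifferentiableAt ℝ h x ∧ DifferentiableAt ℝ (deriv h) x)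
    (hgint : ∀ x ∈ Ico a b, IntegrableOn (fun y => g (x + y) - g x) (Iio (0 : ℝ)) ν)
    (hhint : ∀ x ∈ Ico a b, IntegrableOn (fun y => h (x + y) - h x) (Iio (0 : ℝ)) ν)
    (hharm : ∀ x ∈ Ioo a b, gen δ σ ν h x = 0)
    (hLgcont : ContinuousOn (fun x => gen δ σ ν g x) (Ico a b))
    (hLgneg : ∀ x ∈ Ico a b, gen δ σ ν g x < 0) :
    StrictMonoOn (fun z => h z - g z) (Ioo a b) ∧ ∀ x ∈ Ioo a b, g x < h x :=
  stmt6_general δ σ hσ ν hνint a b hab g h hagree hfC1 hf'a hgdiff hhdiff hgint hhint hharm hLgcont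
    hLgneg
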